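/- Stochastic games with the entropic risk as payoff function are determined: for every turn-based stochastic game G, reward function r : S → [0,∞), basis b > 1, risk-aversion factor γ > 0, and state s, one has sup_σ inf_τ ERisk_{G,s}(σ,τ) = inf_τ sup_σ ERisk_{G,s}(σ,τ) (as values in [0,∞]), where σ ranges over all Maximizer strategies and τ over all Minimizer strategies. -/

import Mathlib

set_option linter.unusedVariables false
set_option linter.unusedSectionVars false


open scoped ENNReal NNReal

/-- A turn-based stochastic game: finitely many states partitioned into Maximizer
states (`isMax s = true`) and Minimizer states, finitely many actions with a nonempty
set of available actions at every state, and a transition function assigning to every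
state and action a probability distribution over states. -/
structure SG (S A : Type*) [Fintype S] [Fintype A] where
  isMax : S → Bool
  actions : S → Finset A
  actions_nonempty : ∀ s, (actions s).Nonempty
  trans : S → A → S → ℝ≥0∞
  trans_sum : ∀ s a, ∑ s' : S, trans s a s' = 1

variable {S A : Type*} [Fintype S] [Fintype A]

/-- A (history-dependent, randomized) strategy: assigns to every history
(a list of past state-action pairs together with the current state) a probability
distribution over the available actions.  The same type serves for Maximizer and
Minimizer strategies; a strategy is only consulted at the states of its owner. -/
structure Strategy (G : SG S A) where
  act : List (S × A) → S → A → ℝ≥0∞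
  act_sum : ∀ h s, ∑ a ∈ G.actions s, act h s a = 1
  act_mem : ∀ h s a, a ∉ G.actions s → act h s a = 0

/-- The memoryless deterministic strategy induced by a function `f : S → A`
choosing an available action in each state. -/
noncomputable def Strategy.ofMD [DecidableEq A] (G : SG S A) (f : S → A)
    (hf : ∀ s, f s ∈ G.actions s) : Strategy G where
  act := fun _ s a => if a = f s then 1 else 0
  act_sum := by
    intro h s
    rw [Finset.sum_ite_eq' (G.actions s) (f s) (fun _ => (1 : ℝ≥0∞))]
    simp [hf s]
  act_mem := by
    intro h s a ha
    by_cases hfa : a = f s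
    · exact absurd (hf s) (by rwa [hfa] at ha)
    · simp [hfa]

/-- Probability, under the strategy profile `(σ, τ)`, that the play starting in state
`s` after history `h` performs exactly the finite sequence `w` of (action, next state)
steps.  This is the cylinder probability of the induced path measure. -/
noncomputable def runProb (G : SG S A) (σ τ : Strategy G) :
    List (S × A) → S → List (A × S) → ℝ≥0∞
  | _, _, [] => 1
  | h, s, (a, s') :: w =>
      (if G.isMax s then σ.act h s a else τ.act h s a) * G.trans s a s' *
        runProb G σ τ (h ++ [(s, a)]) s' w

/-- Finite-horizon negative exponential utility: the expectation, over plays of length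
`n` from `s`, of `b ^ (−γ · (partial total reward))`. -/
noncomputable def utilityN (G : SG S A) (σ τ : Strategy G) (r : S → ℝ≥0) (b γ : ℝ)
    (s : S) (n : ℕ) : ℝ≥0∞ :=
  ∑ w : Fin n → A × S,
    runProb G σ τ [] s (List.ofFn w) *
      ENNReal.ofReal (b ^ (-(γ * ((r s : ℝ) + ∑ i, (r (w i).2 : ℝ)))))

/-- The negative exponential utility `U_{G,s}(σ,τ) = E[b^{−γ T}]`, obtained as the
monotone limit of its finite-horizon approximations (rewards are nonnegative, so the
integrands decrease to `b^{−γT}`, with `b^{−γ·∞} := 0`). -/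
noncomputable def utility (G : SG S A) (σ τ : Strategy G) (r : S → ℝ≥0) (b γ : ℝ)
    (s : S) : ℝ≥0∞ :=
  ⨅ n : ℕ, utilityN G σ τ r b γ s n

/-- Probability that the play from `s` visits the set `T` within the first `n` steps. -/
noncomputable def reachProbN (G : SG S A) (σ τ : Strategy G) (T : Set S) (s : S)
    (n : ℕ) : ℝ≥0∞ :=
  ∑ w : Fin n → A × S,
    Set.indicator {w : Fin n → A × S | s ∈ T ∨ ∃ i, (w i).2 ∈ T}
      (fun w => runProb G σ τ [] s (List.ofFn w)) w

/-- Probability `P^{(σ,τ)}_{G,s}[◇T]` that the play eventually visits `T`. -/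
noncomputable def reachProb (G : SG S A) (σ τ : Strategy G) (T : Set S) (s : S) : ℝ≥0∞ :=
  ⨆ n : ℕ, reachProbN G σ τ T s n

/-- Probability that the total reward accumulated within the first `n` steps exceeds `K`. -/
noncomputable def exceedProbN (G : SG S A) (σ τ : Strategy G) (r : S → ℝ≥0) (K : ℝ)
    (s : S) (n : ℕ) : ℝ≥0∞ :=
  ∑ w : Fin n → A × S,
    Set.indicator {w : Fin n → A × S | K < (r s : ℝ) + ∑ i, (r (w i).2 : ℝ)}
      (fun w => runProb G σ τ [] s (List.ofFn w)) w

/-- `P^{(σ,τ)}_{G,s}[T > 0]`, the probability that the total reward is positive. -/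
noncomputable def probPosReward (G : SG S A) (σ τ : Strategy G) (r : S → ℝ≥0)
    (s : S) : ℝ≥0∞ :=
  ⨆ n : ℕ, exceedProbN G σ τ r 0 s n

/-- `P^{(σ,τ)}_{G,s}[T = ∞]`, the probability that the total reward is infinite. -/
noncomputable def probInfReward (G : SG S A) (σ τ : Strategy G) (r : S → ℝ≥0)
    (s : S) : ℝ≥0∞ :=
  ⨅ K : ℕ, ⨆ n : ℕ, exceedProbN G σ τ r K s n

/-- `S₀`: the states from which the Maximizer cannot achieve positive total reward with
positive probability, i.e. `sup_σ inf_τ P[T > 0] = 0`. -/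
noncomputable def S0 (G : SG S A) (r : S → ℝ≥0) : Set S :=
  {s | (⨆ σ : Strategy G, ⨅ τ : Strategy G, probPosReward G σ τ r s) = 0}

/-- `S∞`: the states from which the Maximizer can ensure infinite total reward almost
surely, i.e. `sup_σ inf_τ P[T = ∞] = 1`. -/
noncomputable def Sinf (G : SG S A) (r : S → ℝ≥0) : Set S :=
  {s | (⨆ σ : Strategy G, ⨅ τ : Strategy G, probInfReward G σ τ r s) = 1}

/-- The optimal negative exponential utility `U*(s) = inf_σ sup_τ U_{G,s}(σ,τ)`. -/
noncomputable def Ustar (G : SG S A) (r : S → ℝ≥0) (b γ : ℝ) (s : S) : ℝ≥0∞ :=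
  ⨅ σ : Strategy G, ⨆ τ : Strategy G, utility G σ τ r b γ s

/-- The entropic risk `−(1/γ)·log_b u` associated to a utility value `u ∈ [0,1]`,
with `−log_b 0 := ∞`. -/
noncomputable def erisk (b γ : ℝ) (u : ℝ≥0∞) : ℝ≥0∞ :=
  if u = 0 then ⊤ else ENNReal.ofReal (-(1 / γ) * Real.logb b u.toReal)

/-- The entropic risk of the total reward under profile `(σ, τ)` from `s`. -/
noncomputable def ERiskVal (G : SG S A) (σ τ : Strategy G) (r : S → ℝ≥0) (b γ : ℝ)
    (s : S) : ℝ≥0∞ :=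
  erisk b γ (utility G σ τ r b γ s)

/-- The optimal entropic risk `ERisk*(s) = sup_σ inf_τ ERisk_{G,s}(σ,τ)`. -/
noncomputable def ERiskStar (G : SG S A) (r : S → ℝ≥0) (b γ : ℝ) (s : S) : ℝ≥0∞ :=
  ⨆ σ : Strategy G, ⨅ τ : Strategy G, ERiskVal G σ τ r b γ s

noncomputable def sshift {G : SG S A} (σ : Strategy G) (p : S × A) : Strategy G where
  act := fun h => σ.act (p :: h)
  act_sum := fun h s => σ.act_sum (p :: h) s
  act_mem := fun h s a ha => σ.act_mem (p :: h) s a ha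

lemma runProb_shift (G : SG S A) (σ τ : Strategy G) (p : S × A) :
    ∀ (w : List (A × S)) (h : List (S × A)) (s : S),
      runProb G σ τ (p :: h) s w = runProb G (sshift σ p) (sshift τ p) h s w
  | [], _, _ => rfl
  | (a, s') :: w, h, s => by
      simp only [runProb, sshift]
      rw [show (p :: h) ++ [(s,a)] = p :: (h ++ [(s,a)]) from rfl]
      rw [runProb_shift G σ τ p w (h ++ [(s,a)]) s']
      rfl

lemma utilityN_zero (G : SG S A) (σ τ : Strategy G) (r : S → ℝ≥0) (b γ : ℝ) (s : S) :
    utilityN G σ τ r b γ s 0 = ENNReal.ofReal (b ^ (-(γ * (r s : ℝ)))) := by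
  simp [utilityN, runProb]

lemma utilityN_succ (G : SG S A) (σ τ : Strategy G) (r : S → ℝ≥0) (b γ : ℝ)
    (hb : 1 < b) (s : S) (n : ℕ) :
    utilityN G σ τ r b γ s (n + 1) =
      ENNReal.ofReal (b ^ (-(γ * (r s : ℝ)))) *
        ∑ p : A × S, (if G.isMax s then σ.act [] s p.1 else τ.act [] s p.1) *
          G.trans s p.1 p.2 *
          utilityN G (sshift σ (s, p.1)) (sshift τ (s, p.1)) r b γ p.2 n := by
  have hb0 : (0:ℝ) < b := by linarith
  rw [utilityN, ← Equiv.sum_comp (Fin.consEquiv (fun _ : Fin (n+1) => A × S)),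
    Fintype.sum_prod_type, Finset.mul_sum]
  refine Finset.sum_congr rfl fun p _ => ?_
  rw [utilityN, Finset.mul_sum, Finset.mul_sum]
  refine Finset.sum_congr rfl fun w _ => ?_
  obtain ⟨a, s'⟩ := p
  have h1 : (Fin.consEquiv (fun _ : Fin (n+1) => A × S)) ((a, s'), w) =
      Fin.cons (a, s') w := rfl
  rw [h1, List.ofFn_succ]
  simp only [Fin.cons_zero, Fin.cons_succ]
  have h2 : runProb G σ τ [] s ((a, s') :: List.ofFn w) =
      (if G.isMax s then σ.act [] s a else τ.act [] s a) * G.trans s a s' *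
        runProb G (sshift σ (s,a)) (sshift τ (s,a)) [] s' (List.ofFn w) := by
    rw [runProb]
    rw [show ([] : List (S×A)) ++ [(s,a)] = (s,a) :: [] from rfl, runProb_shift]
  rw [h2, Fin.sum_univ_succ]
  simp only [Fin.cons_succ, Fin.cons_zero]
  have h3 : (-(γ * ((r s : ℝ) + ((r s' : ℝ) + ∑ i : Fin n, (r (w i).2 : ℝ))))) =
      (-(γ * (r s : ℝ))) + (-(γ * ((r s' : ℝ) + ∑ i : Fin n, (r (w i).2 : ℝ)))) := by ring
  rw [h3, Real.rpow_add hb0, ENNReal.ofReal_mul (Real.rpow_nonneg (le_of_lt hb0) _)]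
  ring

noncomputable def cst (r : S → ℝ≥0) (b γ : ℝ) (s : S) : ℝ≥0∞ :=
  ENNReal.ofReal (b ^ (-(γ * (r s : ℝ))))

lemma cst_le_one {r : S → ℝ≥0} {b γ : ℝ} (hb : 1 < b) (hγ : 0 < γ) (s : S) :
    cst r b γ s ≤ 1 := by
  rw [cst, show (1:ℝ≥0∞) = ENNReal.ofReal 1 by simp]
  refine ENNReal.ofReal_le_ofReal (Real.rpow_le_one_of_one_le_of_nonpos hb.le ?_)
  have : 0 ≤ γ * (r s : ℝ) := mul_nonneg hγ.le (r s).coe_nonneg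
  linarith

lemma cst_ne_top (r : S → ℝ≥0) (b γ : ℝ) (s : S) : cst r b γ s ≠ ⊤ :=
  ENNReal.ofReal_ne_top

noncomputable def sval (G : SG S A) (v : S → ℝ≥0∞) (s : S) (a : A) : ℝ≥0∞ :=
  ∑ s' : S, G.trans s a s' * v s'

lemma sval_mono (G : SG S A) {v w : S → ℝ≥0∞} (h : v ≤ w) (s : S) (a : A) :
    sval G v s a ≤ sval G w s a :=
  Finset.sum_le_sum fun s' _ => mul_le_mul_right (h s') _

lemma sval_le_one (G : SG S A) {v : S → ℝ≥0∞} (h : ∀ s, v s ≤ 1) (s : S) (a : A) :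
    sval G v s a ≤ 1 := by
  calc sval G v s a ≤ ∑ s' : S, G.trans s a s' * 1 :=
        Finset.sum_le_sum fun s' _ => mul_le_mul_right (h s') _
    _ = 1 := by simp [G.trans_sum s a]

noncomputable def Phi (G : SG S A) (r : S → ℝ≥0) (b γ : ℝ) (v : S → ℝ≥0∞) (s : S) :
    ℝ≥0∞ :=
  cst r b γ s *
    (if G.isMax s then (G.actions s).inf' (G.actions_nonempty s) (sval G v s)
      else (G.actions s).sup' (G.actions_nonempty s) (sval G v s))

lemma Phi_mono (G : SG S A) (r : S → ℝ≥0) (b γ : ℝ) {v w : S → ℝ≥0∞} (h : v ≤ w) :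
    Phi G r b γ v ≤ Phi G r b γ w := by
  intro s
  refine mul_le_mul_right ?_ _
  split
  · refine Finset.le_inf' _ _ fun a ha => (Finset.inf'_le _ ha).trans (sval_mono G h s a)
  · exact Finset.sup'_mono_fun fun a _ => sval_mono G h s a

lemma Phi_le_cst (G : SG S A) (r : S → ℝ≥0) (b γ : ℝ) {v : S → ℝ≥0∞}
    (h : ∀ s, v s ≤ 1) (s : S) : Phi G r b γ v s ≤ cst r b γ s := by
  rw [Phi]
  refine mul_le_of_le_one_right zero_le ?_
  split
  · obtain ⟨a, ha⟩ := G.actions_nonempty s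
    exact (Finset.inf'_le _ ha).trans (sval_le_one G h s a)
  · exact Finset.sup'_le _ _ fun a _ => sval_le_one G h s a

noncomputable def vIt (G : SG S A) (r : S → ℝ≥0) (b γ : ℝ) : ℕ → S → ℝ≥0∞
  | 0 => cst r b γ
  | n+1 => Phi G r b γ (vIt G r b γ n)

lemma vIt_le_one (G : SG S A) {r : S → ℝ≥0} {b γ : ℝ} (hb : 1 < b) (hγ : 0 < γ)
    (n : ℕ) (s : S) : vIt G r b γ n s ≤ 1 := by
  induction n generalizing s with
  | zero => exact cst_le_one hb hγ s
  | succ n ih => exact (Phi_le_cst G r b γ ih s).trans (cst_le_one hb hγ s)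

lemma vIt_antitone (G : SG S A) {r : S → ℝ≥0} {b γ : ℝ} (hb : 1 < b) (hγ : 0 < γ) :
    Antitone (vIt G r b γ) := by
  refine antitone_nat_of_succ_le fun n => ?_
  induction n with
  | zero => exact Phi_le_cst G r b γ (vIt_le_one G hb hγ 0)
  | succ n ih => exact Phi_mono G r b γ ih

noncomputable def VV (G : SG S A) (r : S → ℝ≥0) (b γ : ℝ) (s : S) : ℝ≥0∞ :=
  ⨅ n, vIt G r b γ n s

lemma mul_iInf_ne_top {a : ℝ≥0∞} (ha : a ≠ ⊤) (f : ℕ → ℝ≥0∞) :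
    a * ⨅ n, f n = ⨅ n, a * f n := by
  rcases eq_or_ne a 0 with rfl | h0
  · simp
  · exact ENNReal.mul_iInf_of_ne h0 ha

lemma iInf_sum_antitone {ι : Type*} (F : Finset ι) (f : ι → ℕ → ℝ≥0∞)
    (hf : ∀ i, Antitone (f i)) :
    ∑ i ∈ F, ⨅ n, f i n = ⨅ n, ∑ i ∈ F, f i n := by
  classical
  induction F using Finset.induction_on with
  | empty => simp
  | insert j F' hj ih =>
    rw [Finset.sum_insert hj, ih]
    rw [ENNReal.iInf_add_iInf (fun i k => ⟨max i k,
      add_le_add (hf j (le_max_left i k))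
        (Finset.sum_le_sum fun x _ => hf x (le_max_right i k))⟩)]
    exact iInf_congr fun n => by rw [Finset.sum_insert hj]

lemma iInf_inf' {ι : Type*} (F : Finset ι) (hne : F.Nonempty) (f : ι → ℕ → ℝ≥0∞) :
    F.inf' hne (fun a => ⨅ n, f a n) = ⨅ n, F.inf' hne (fun a => f a n) := by
  refine le_antisymm (le_iInf fun n => ?_) (Finset.le_inf' _ _ fun a ha => le_iInf fun n =>
    (iInf_le _ n).trans (Finset.inf'_le _ ha))
  exact Finset.le_inf' _ _ fun a ha => (Finset.inf'_le _ ha).trans (iInf_le _ n)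

lemma iInf_sup'_antitone {ι : Type*} (F : Finset ι) (hne : F.Nonempty)
    (f : ι → ℕ → ℝ≥0∞) (hf : ∀ i, Antitone (f i)) :
    F.sup' hne (fun a => ⨅ n, f a n) = ⨅ n, F.sup' hne (fun a => f a n) := by
  classical
  refine le_antisymm (le_iInf fun n => Finset.sup'_le _ _ fun a ha =>
    (iInf_le _ n).trans (Finset.le_sup' (fun a => f a n) ha)) ?_
  have hch : ∀ n : ℕ, ∃ a, a ∈ F ∧ F.sup' hne (fun a => f a n) = f a n := fun n =>
    Finset.exists_mem_eq_sup' hne _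
  choose g hgF hgv using hch
  have : ∃ y : {x // x ∈ F}, (Set.Infinite ((fun n => (⟨g n, hgF n⟩ : {x // x ∈ F})) ⁻¹' {y})) := by
    obtain ⟨y, hy⟩ := Finite.exists_infinite_fiber (fun n => (⟨g n, hgF n⟩ : {x // x ∈ F}))
    exact ⟨y, Set.infinite_coe_iff.mp hy⟩
  obtain ⟨⟨a₀, ha₀⟩, hinf⟩ := this
  refine le_trans (le_iInf fun m => ?_) (Finset.le_sup' (fun a => ⨅ n, f a n) ha₀)
  obtain ⟨k, hk, hmk⟩ := hinf.exists_gt m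
  have hgk : g k = a₀ := by simpa using congrArg Subtype.val hk
  exact (iInf_le _ k).trans ((hgv k).le.trans (by rw [hgk]; exact hf a₀ hmk.le))

lemma sval_VV (G : SG S A) {r : S → ℝ≥0} {b γ : ℝ} (hb : 1 < b) (hγ : 0 < γ)
    (s : S) (a : A) :
    sval G (VV G r b γ) s a = ⨅ n, sval G (vIt G r b γ n) s a := by
  rw [sval]
  have : ∀ s' : S, G.trans s a s' * VV G r b γ s' = ⨅ n, G.trans s a s' * vIt G r b γ n s' := by
    intro s'
    refine mul_iInf_ne_top ?_ _
    intro h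
    have := G.trans_sum s a
    have hle : G.trans s a s' ≤ 1 := by
      rw [← this]; exact Finset.single_le_sum (fun _ _ => zero_le) (Finset.mem_univ s')
    simp [h] at hle
  simp_rw [this]
  exact iInf_sum_antitone Finset.univ _ fun s' i j hij =>
    mul_le_mul_right (vIt_antitone G hb hγ hij s') _

lemma sval_antitone_n (G : SG S A) {r : S → ℝ≥0} {b γ : ℝ} (hb : 1 < b) (hγ : 0 < γ)
    (s : S) (a : A) : Antitone (fun n => sval G (vIt G r b γ n) s a) :=
  fun i j hij => sval_mono G (fun s' => vIt_antitone G hb hγ hij s') s a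

lemma Phi_VV (G : SG S A) {r : S → ℝ≥0} {b γ : ℝ} (hb : 1 < b) (hγ : 0 < γ) :
    Phi G r b γ (VV G r b γ) = VV G r b γ := by
  funext s
  have h1 : Phi G r b γ (VV G r b γ) s = ⨅ n, vIt G r b γ (n+1) s := by
    rw [Phi]
    have hbr : (if G.isMax s then (G.actions s).inf' (G.actions_nonempty s)
          (sval G (VV G r b γ) s)
        else (G.actions s).sup' (G.actions_nonempty s) (sval G (VV G r b γ) s)) =
        ⨅ n, (if G.isMax s then (G.actions s).inf' (G.actions_nonempty s)
          (sval G (vIt G r b γ n) s)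
        else (G.actions s).sup' (G.actions_nonempty s) (sval G (vIt G r b γ n) s)) := by
      split
      · rw [show (sval G (VV G r b γ) s) = fun a => ⨅ n, sval G (vIt G r b γ n) s a from
          funext fun a => sval_VV G hb hγ s a]
        exact iInf_inf' _ _ _
      · rw [show (sval G (VV G r b γ) s) = fun a => ⨅ n, sval G (vIt G r b γ n) s a from
          funext fun a => sval_VV G hb hγ s a]
        exact iInf_sup'_antitone _ _ _ fun a => sval_antitone_n G hb hγ s a
    rw [hbr, mul_iInf_ne_top (cst_ne_top r b γ s)]
    exact iInf_congr fun n => rfl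
  rw [h1]
  exact le_antisymm
    (le_iInf fun n => (iInf_le (fun m => vIt G r b γ (m+1) s) n).trans
      (vIt_antitone G hb hγ (Nat.le_succ n) s))
    (le_iInf fun n => iInf_le (fun m => vIt G r b γ m s) (n+1))

lemma sum_prod_act (G : SG S A) (act : A → ℝ≥0∞) (v : S → ℝ≥0∞) (s : S) :
    ∑ p : A × S, act p.1 * G.trans s p.1 p.2 * v p.2 =
      ∑ a : A, act a * sval G v s a := by
  rw [Fintype.sum_prod_type]
  refine Finset.sum_congr rfl fun a _ => ?_
  rw [sval, Finset.mul_sum]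
  exact Finset.sum_congr rfl fun s' _ => by ring

lemma sum_act_le_sup' (G : SG S A) (act : A → ℝ≥0∞) (s : S)
    (hsum : ∑ a ∈ G.actions s, act a = 1) (hmem : ∀ a, a ∉ G.actions s → act a = 0)
    (X : A → ℝ≥0∞) :
    ∑ a : A, act a * X a ≤ (G.actions s).sup' (G.actions_nonempty s) X := by
  rw [← Finset.sum_subset (Finset.subset_univ (G.actions s))
    (fun a _ ha => by rw [hmem a ha, zero_mul])]
  calc ∑ a ∈ G.actions s, act a * X a
      ≤ ∑ a ∈ G.actions s, act a * (G.actions s).sup' (G.actions_nonempty s) X :=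
        Finset.sum_le_sum fun a ha => mul_le_mul_right (Finset.le_sup' X ha) _
    _ = (G.actions s).sup' (G.actions_nonempty s) X := by
        rw [← Finset.sum_mul, hsum, one_mul]

lemma inf'_le_sum_act (G : SG S A) (act : A → ℝ≥0∞) (s : S)
    (hsum : ∑ a ∈ G.actions s, act a = 1) (hmem : ∀ a, a ∉ G.actions s → act a = 0)
    (X : A → ℝ≥0∞) :
    (G.actions s).inf' (G.actions_nonempty s) X ≤ ∑ a : A, act a * X a := by
  rw [← Finset.sum_subset (Finset.subset_univ (G.actions s))
    (fun a _ ha => by rw [hmem a ha, zero_mul])]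
  calc (G.actions s).inf' (G.actions_nonempty s) X
      = ∑ a ∈ G.actions s, act a * (G.actions s).inf' (G.actions_nonempty s) X := by
        rw [← Finset.sum_mul, hsum, one_mul]
    _ ≤ ∑ a ∈ G.actions s, act a * X a :=
        Finset.sum_le_sum fun a ha => mul_le_mul_right (Finset.inf'_le X ha) _

lemma sum_act_ite [DecidableEq A] (a₀ : A) (X : A → ℝ≥0∞) :
    ∑ a : A, (if a = a₀ then (1:ℝ≥0∞) else 0) * X a = X a₀ := by
  rw [show (fun a => (if a = a₀ then (1:ℝ≥0∞) else 0) * X a) =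
      (fun a => if a = a₀ then X a else 0) from funext fun a => by
        by_cases h : a = a₀ <;> simp [h]]
  rw [Finset.sum_ite_eq' Finset.univ a₀ X]
  simp

lemma VV_le_utilityN [DecidableEq A] (G : SG S A) {r : S → ℝ≥0} {b γ : ℝ}
    (hb : 1 < b) (hγ : 0 < γ)
    (tch : S → A) (htch1 : ∀ s, tch s ∈ G.actions s)
    (htch2 : ∀ s, ¬ G.isMax s →
      (G.actions s).sup' (G.actions_nonempty s) (sval G (VV G r b γ) s) =
        sval G (VV G r b γ) s (tch s)) :
    ∀ (n : ℕ) (σ τ : Strategy G),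
      (∀ h s a, τ.act h s a = if a = tch s then 1 else 0) →
      ∀ s, VV G r b γ s ≤ utilityN G σ τ r b γ s n := by
  intro n
  induction n with
  | zero =>
    intro σ τ hτ s
    rw [utilityN_zero]
    exact iInf_le (fun m => vIt G r b γ m s) 0
  | succ n ih =>
    intro σ τ hτ s
    rw [utilityN_succ G σ τ r b γ hb s n]
    have step : ∀ p : A × S, VV G r b γ p.2 ≤
        utilityN G (sshift σ (s, p.1)) (sshift τ (s, p.1)) r b γ p.2 n := by
      intro p
      exact ih (sshift σ (s, p.1)) (sshift τ (s, p.1))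
        (fun h s' a => hτ ((s, p.1) :: h) s' a) p.2
    calc VV G r b γ s = Phi G r b γ (VV G r b γ) s := (congrFun (Phi_VV G hb hγ) s).symm
      _ ≤ _ := ?_
    rw [Phi]
    refine mul_le_mul_right ?_ _
    have hle : ∑ a : A, (if G.isMax s then σ.act [] s a else τ.act [] s a) *
          sval G (VV G r b γ) s a ≤
        ∑ p : A × S, (if G.isMax s then σ.act [] s p.1 else τ.act [] s p.1) *
          G.trans s p.1 p.2 * utilityN G (sshift σ (s, p.1)) (sshift τ (s, p.1)) r b γ p.2 n := by
      rw [← sum_prod_act G _ (VV G r b γ) s]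
      exact Finset.sum_le_sum fun p _ => mul_le_mul_right (step p) _
    refine le_trans ?_ hle
    by_cases hmax : G.isMax s
    · simp only [hmax, if_true]
      exact inf'_le_sum_act G _ s (σ.act_sum [] s) (σ.act_mem [] s) _
    · simp only [hmax, Bool.false_eq_true, if_false]
      have hsum : ∑ a : A, τ.act [] s a * sval G (VV G r b γ) s a =
          sval G (VV G r b γ) s (tch s) := by
        rw [Finset.sum_congr rfl (fun a _ => by rw [hτ [] s a])]
        exact sum_act_ite (tch s) _
      rw [hsum, htch2 s hmax]

lemma utilityN_le_vIt [DecidableEq A] (G : SG S A) {r : S → ℝ≥0} {b γ : ℝ}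
    (hb : 1 < b) (hγ : 0 < γ)
    (cmin : ℕ → S → A) (hc1 : ∀ m s, cmin m s ∈ G.actions s)
    (hc2 : ∀ m s, G.isMax s →
      (G.actions s).inf' (G.actions_nonempty s) (sval G (vIt G r b γ m) s) =
        sval G (vIt G r b γ m) s (cmin m s)) :
    ∀ (n : ℕ) (σ τ : Strategy G),
      (∀ h s a, σ.act h s a = if a = cmin (n - 1 - h.length) s then 1 else 0) →
      ∀ s, utilityN G σ τ r b γ s n ≤ vIt G r b γ n s := by
  intro n
  induction n with
  | zero =>
    intro σ τ hσ s
    rw [utilityN_zero]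
    exact le_rfl
  | succ n ih =>
    intro σ τ hσ s
    rw [utilityN_succ G σ τ r b γ hb s n]
    have hshift : ∀ p : A × S,
        utilityN G (sshift σ (s, p.1)) (sshift τ (s, p.1)) r b γ p.2 n ≤
          vIt G r b γ n p.2 := by
      intro p
      refine ih (sshift σ (s, p.1)) (sshift τ (s, p.1)) ?_ p.2
      intro h s' a
      have heq : n + 1 - 1 - ((s, p.1) :: h).length = n - 1 - h.length := by
        simp only [List.length_cons]; omega
      show σ.act ((s, p.1) :: h) s' a = _
      rw [hσ ((s, p.1) :: h) s' a, heq]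
    show _ ≤ Phi G r b γ (vIt G r b γ n) s
    rw [Phi]
    refine mul_le_mul_right ?_ _
    have hle : ∑ p : A × S, (if G.isMax s then σ.act [] s p.1 else τ.act [] s p.1) *
          G.trans s p.1 p.2 *
          utilityN G (sshift σ (s, p.1)) (sshift τ (s, p.1)) r b γ p.2 n ≤
        ∑ a : A, (if G.isMax s then σ.act [] s a else τ.act [] s a) *
          sval G (vIt G r b γ n) s a := by
      rw [← sum_prod_act G _ (vIt G r b γ n) s]
      exact Finset.sum_le_sum fun p _ => mul_le_mul_right (hshift p) _
    refine hle.trans ?_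
    by_cases hmax : G.isMax s
    · simp only [hmax, if_true]
      have hσ0 : ∀ a, σ.act [] s a = if a = cmin n s then 1 else 0 := by
        intro a; simpa using hσ [] s a
      have hsum : ∑ a : A, σ.act [] s a * sval G (vIt G r b γ n) s a =
          sval G (vIt G r b γ n) s (cmin n s) := by
        rw [Finset.sum_congr rfl (fun a _ => by rw [hσ0 a])]
        exact sum_act_ite (cmin n s) _
      rw [hsum, ← hc2 n s hmax]
    · simp only [hmax, Bool.false_eq_true, if_false]
      exact sum_act_le_sup' G _ s (τ.act_sum [] s) (τ.act_mem [] s) _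

noncomputable def clockStrat [DecidableEq A] (G : SG S A) (f : ℕ → S → A)
    (hf : ∀ m s, f m s ∈ G.actions s) (n : ℕ) : Strategy G where
  act := fun h s a => if a = f (n - 1 - h.length) s then 1 else 0
  act_sum := fun h s => by
    rw [Finset.sum_ite_eq' (G.actions s) (f (n - 1 - h.length) s) (fun _ => (1:ℝ≥0∞))]
    simp [hf]
  act_mem := fun h s a ha => by
    by_cases hfa : a = f (n - 1 - h.length) s
    · exact absurd (hf _ s) (by rwa [hfa] at ha)
    · simp [hfa]

theorem utility_determined (G : SG S A) (r : S → ℝ≥0) {b γ : ℝ}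
    (hb : 1 < b) (hγ : 0 < γ) (s : S) :
    (⨅ σ : Strategy G, ⨆ τ : Strategy G, utility G σ τ r b γ s) =
      ⨆ τ : Strategy G, ⨅ σ : Strategy G, utility G σ τ r b γ s := by
  classical
  refine le_antisymm ?_ (iSup_iInf_le_iInf_iSup _)
  have hA : (⨅ σ : Strategy G, ⨆ τ : Strategy G, utility G σ τ r b γ s) ≤
      VV G r b γ s := by
    rw [VV]
    refine le_iInf fun n => ?_
    have hc : ∀ (m : ℕ) (st : S), ∃ a, a ∈ G.actions st ∧
        (G.actions st).inf' (G.actions_nonempty st) (sval G (vIt G r b γ m) st) =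
          sval G (vIt G r b γ m) st a := fun m st =>
      Finset.exists_mem_eq_inf' (G.actions_nonempty st) _
    choose cmin hc1 hc2 using hc
    refine (iInf_le _ (clockStrat G cmin hc1 n)).trans (iSup_le fun τ => ?_)
    refine (iInf_le (fun m => utilityN G (clockStrat G cmin hc1 n) τ r b γ s m) n).trans ?_
    exact utilityN_le_vIt G hb hγ cmin hc1 (fun m st _ => hc2 m st) n
      (clockStrat G cmin hc1 n) τ (fun h st a => rfl) s
  have hB : VV G r b γ s ≤
      ⨆ τ : Strategy G, ⨅ σ : Strategy G, utility G σ τ r b γ s := by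
    have hc : ∀ st : S, ∃ a, a ∈ G.actions st ∧
        (G.actions st).sup' (G.actions_nonempty st) (sval G (VV G r b γ) st) =
          sval G (VV G r b γ) st a := fun st =>
      Finset.exists_mem_eq_sup' (G.actions_nonempty st) _
    choose tch htch1 htch2 using hc
    refine le_trans ?_ (le_iSup _ (Strategy.ofMD G tch htch1))
    refine le_iInf fun σ => le_iInf fun n => ?_
    exact VV_le_utilityN G hb hγ tch htch1 (fun st _ => htch2 st) n σ
      (Strategy.ofMD G tch htch1) (fun h st a => rfl) s
  exact hA.trans hB

noncomputable def phiAdj (b γ : ℝ) (v : ℝ≥0∞) : ℝ≥0∞ :=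
  if v = ⊤ then 0 else ENNReal.ofReal (b ^ (-(γ * v.toReal)))

noncomputable def psiAdj (b γ : ℝ) (v : ℝ≥0∞) : ℝ≥0∞ :=
  if v = 0 then ⊤ else if v = ⊤ then 0 else ENNReal.ofReal (b ^ (-(γ * v.toReal)))

lemma erisk_le_iff {b γ : ℝ} (hb : 1 < b) (hγ : 0 < γ) (u v : ℝ≥0∞) :
    erisk b γ u ≤ v ↔ phiAdj b γ v ≤ u := by
  have hb0 : (0:ℝ) < b := by linarith
  rcases eq_or_ne v ⊤ with rfl | hv
  · simp [phiAdj]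
  rcases eq_or_ne u 0 with rfl | hu0
  · rw [erisk, if_pos rfl, phiAdj, if_neg hv]
    simp only [top_le_iff, le_zero_iff, ENNReal.ofReal_eq_zero]
    exact iff_of_false hv (not_le.mpr (Real.rpow_pos_of_pos hb0 _))
  rcases eq_or_ne u ⊤ with rfl | hut
  · simp only [erisk, if_neg hu0, ENNReal.toReal_top, Real.logb_zero, mul_zero,
      ENNReal.ofReal_zero, zero_le, le_top, iff_true]
  have hu : 0 < u.toReal := ENNReal.toReal_pos hu0 hut
  rw [erisk, if_neg hu0, phiAdj, if_neg hv,
    ENNReal.ofReal_le_iff_le_toReal hv, ENNReal.ofReal_le_iff_le_toReal hut]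
  have key : ∀ L V : ℝ, -(1/γ) * L ≤ V ↔ -(γ * V) ≤ L := by
    intro L V
    constructor
    · intro h
      have h' := mul_le_mul_of_nonneg_left h hγ.le
      have e : γ * (-(1/γ) * L) = -L := by field_simp
      linarith
    · intro h
      have h' := mul_le_mul_of_nonneg_left h (le_of_lt (by positivity : (0:ℝ) < 1/γ))
      have e : (1/γ) * (-(γ * V)) = -V := by field_simp
      linarith
  rw [key]
  exact Real.le_logb_iff_rpow_le hb hu

lemma le_erisk_iff {b γ : ℝ} (hb : 1 < b) (hγ : 0 < γ) (u v : ℝ≥0∞) :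
    v ≤ erisk b γ u ↔ u ≤ psiAdj b γ v := by
  have hb0 : (0:ℝ) < b := by linarith
  rcases eq_or_ne v 0 with rfl | hv0
  · simp [psiAdj]
  rcases eq_or_ne u 0 with rfl | hu0
  · simp [erisk, psiAdj]
  rcases eq_or_ne v ⊤ with rfl | hvt
  · rw [erisk, if_neg hu0, psiAdj, if_neg hv0, if_pos rfl]
    simp only [top_le_iff, le_zero_iff]
    exact iff_of_false (fun h => ENNReal.ofReal_ne_top h) hu0
  rcases eq_or_ne u ⊤ with rfl | hut
  · rw [erisk, if_neg hu0, psiAdj, if_neg hv0, if_neg hvt]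
    simp only [ENNReal.toReal_top, Real.logb_zero, mul_zero,
      ENNReal.ofReal_zero, le_zero_iff, top_le_iff]
    exact iff_of_false hv0 ENNReal.ofReal_ne_top
  have hu : 0 < u.toReal := ENNReal.toReal_pos hu0 hut
  by_cases hL : 0 ≤ -(1 / γ) * Real.logb b u.toReal
  · rw [erisk, if_neg hu0, psiAdj, if_neg hv0, if_neg hvt,
      ENNReal.le_ofReal_iff_toReal_le hvt hL,
      ENNReal.le_ofReal_iff_toReal_le hut (Real.rpow_nonneg hb0.le _)]
    have key : ∀ L V : ℝ, V ≤ -(1/γ) * L ↔ L ≤ -(γ * V) := by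
      intro L V
      constructor
      · intro h
        have h' := mul_le_mul_of_nonneg_left h hγ.le
        have e : γ * (-(1/γ) * L) = -L := by field_simp
        linarith
      · intro h
        have h' := mul_le_mul_of_nonneg_left h (le_of_lt (by positivity : (0:ℝ) < 1/γ))
        have e : (1/γ) * (-(γ * V)) = -V := by field_simp
        linarith
    rw [key]
    exact Real.logb_le_iff_le_rpow hb hu
  · have hγ' : 0 < 1 / γ := by positivity
    have hL2 : 0 < Real.logb b u.toReal := by nlinarith
    have hv : 0 < v.toReal := ENNReal.toReal_pos hv0 hvt
    constructor
    · intro h; exfalso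
      rw [erisk, if_neg hu0] at h
      have h0 : ENNReal.ofReal (-(1 / γ) * Real.logb b u.toReal) = 0 :=
        ENNReal.ofReal_eq_zero.mpr (le_of_not_ge hL)
      rw [h0, le_zero_iff] at h
      exact hv0 h
    · intro h; exfalso
      rw [psiAdj, if_neg hv0, if_neg hvt] at h
      have h2 := ENNReal.toReal_mono ENNReal.ofReal_ne_top h
      rw [ENNReal.toReal_ofReal (Real.rpow_nonneg hb0.le _)] at h2
      have hu1 : 1 < u.toReal := (Real.logb_pos_iff hb hu).mp hL2
      have hX : b ^ (-(γ * v.toReal)) ≤ 1 :=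
        Real.rpow_le_one_of_one_le_of_nonpos hb.le (by nlinarith)
      linarith

lemma erisk_iInf' {b γ : ℝ} (hb : 1 < b) (hγ : 0 < γ) {ι : Sort*} (u : ι → ℝ≥0∞) :
    erisk b γ (⨅ i, u i) = ⨆ i, erisk b γ (u i) := by
  have gc : GaloisConnection (fun x : ℝ≥0∞ᵒᵈ => erisk b γ (OrderDual.ofDual x))
      (fun v : ℝ≥0∞ => OrderDual.toDual (phiAdj b γ v)) := fun x v =>
    erisk_le_iff hb hγ (OrderDual.ofDual x) v
  have h := gc.l_iSup (f := fun i => OrderDual.toDual (u i))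
  simpa using h

lemma erisk_iSup' {b γ : ℝ} (hb : 1 < b) (hγ : 0 < γ) {ι : Sort*} (u : ι → ℝ≥0∞) :
    erisk b γ (⨆ i, u i) = ⨅ i, erisk b γ (u i) := by
  have gc : GaloisConnection (fun v : ℝ≥0∞ => OrderDual.toDual (psiAdj b γ v))
      (fun x : ℝ≥0∞ᵒᵈ => erisk b γ (OrderDual.ofDual x)) := fun v x =>
    (le_erisk_iff hb hγ (OrderDual.ofDual x) v).symm
  have h := gc.u_iInf (f := fun i => OrderDual.toDual (u i))
  simpa using h

theorem erisk_determined' (G : SG S A) (r : S → ℝ≥0) (b γ : ℝ)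
    (hb : 1 < b) (hγ : 0 < γ) (s : S) :
    (⨆ σ : Strategy G, ⨅ τ : Strategy G, erisk b γ (utility G σ τ r b γ s)) =
      ⨅ τ : Strategy G, ⨆ σ : Strategy G, erisk b γ (utility G σ τ r b γ s) := by
  calc (⨆ σ : Strategy G, ⨅ τ : Strategy G, erisk b γ (utility G σ τ r b γ s))
      = ⨆ σ : Strategy G, erisk b γ (⨆ τ : Strategy G, utility G σ τ r b γ s) :=
        iSup_congr fun σ => (erisk_iSup' hb hγ _).symm
    _ = erisk b γ (⨅ σ : Strategy G, ⨆ τ : Strategy G, utility G σ τ r b γ s) :=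
        (erisk_iInf' hb hγ _).symm
    _ = erisk b γ (⨆ τ : Strategy G, ⨅ σ : Strategy G, utility G σ τ r b γ s) := by
        rw [utility_determined G r hb hγ s]
    _ = ⨅ τ : Strategy G, erisk b γ (⨅ σ : Strategy G, utility G σ τ r b γ s) :=
        erisk_iSup' hb hγ _
    _ = ⨅ τ : Strategy G, ⨆ σ : Strategy G, erisk b γ (utility G σ τ r b γ s) :=
        iInf_congr fun τ => erisk_iInf' hb hγ _

/-- Stochastic games with the entropic risk as payoff function are
determined: `sup_σ inf_τ ERisk_{G,s}(σ,τ) = inf_τ sup_σ ERisk_{G,s}(σ,τ)` in `[0,∞]`. -/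
theorem erisk_determined (G : SG S A) (r : S → ℝ≥0) (b γ : ℝ)
    (hb : 1 < b) (hγ : 0 < γ) (s : S) :
    (⨆ σ : Strategy G, ⨅ τ : Strategy G, ERiskVal G σ τ r b γ s) =
      ⨅ τ : Strategy G, ⨆ σ : Strategy G, ERiskVal G σ τ r b γ s := by
  simp only [ERiskVal]
  exact erisk_determined' G r b γ hb hγ s
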